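/- For every integer k ≥ 5, the chain of strict inequalities u_1(k) < u_2(k) < u_3(k) < u_4(k) holds. -/

import Mathlib

noncomputable section

def u1 (k : ℕ) : ℝ := -(2 * ((k : ℝ) - 1)) / ((k : ℝ) - 2)

def u2 (k : ℕ) : ℝ :=
  ((k : ℝ) - 4 - Real.sqrt (17 * (k : ℝ) ^ 2 - 48 * (k : ℝ) + 32)) / (2 * ((k : ℝ) - 2))

def u3 (k : ℕ) : ℝ :=
  4 * ((k : ℝ) - 1) * (-3 * (k : ℝ) + 4 - 2 * Real.sqrt ((k : ℝ) - 1)) /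
    (((k : ℝ) - 2) * (9 * (k : ℝ) - 10))

def u4 (k : ℕ) : ℝ :=
  -1 - (k : ℝ) /
    (3 * (k : ℝ) ^ 2 - 2 * ((k : ℝ) - 1) ^ 2 * Real.sqrt (2 * (k : ℝ) / ((k : ℝ) - 1)) -
      4 * (k : ℝ))

/-!
Each square root is traded for a rational bound, after which every link is a polynomial
inequality in `x = k`: `√(17x² - 48x + 32) < 5x - 8`; `4√(x - 1) ≤ x + 3` (AM–GM, sharp at `x = 5`);
`2 ≤ √(x - 1)`; and `24(x - 1)²√(2x/(x - 1)) < 17(2x - 1)(x - 1)`, which holds because `17² > 2 · 12²`.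
The middle link is the delicate one: at `k = 5` its two sides agree to within about `0.1%`, which is why
the sharp AM–GM bound is needed there. The remaining polynomials are positive on `[5, ∞)` because
all their Taylor coefficients at `5` are.
-/

open Real

lemma lt_mul_sqrt_of_sq_lt {a c y : ℝ} (hc : 0 ≤ c) (h : a ^ 2 < c ^ 2 * y) : a < c * √y := by
  rcases lt_or_ge a 0 with ha | ha
  · exact ha.trans_le (by positivity)
  · rwa [← sqrt_sq hc, ← sqrt_mul (sq_nonneg c), lt_sqrt ha]

lemma mul_sqrt_lt_of_sq_lt {a c y : ℝ} (ha : 0 < a) (hc : 0 ≤ c) (h : c ^ 2 * y < a ^ 2) :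
    c * √y < a := by
  rwa [← sqrt_sq hc, ← sqrt_mul (sq_nonneg c), sqrt_lt' ha]

theorem u1_lt_u2 {k : ℕ} (hk : 3 ≤ k) : u1 k < u2 k := by
  unfold u1 u2
  have hx : (3 : ℝ) ≤ k := by exact_mod_cast hk
  generalize (k : ℝ) = x at hx ⊢
  have hs1 : √(17 * x ^ 2 - 48 * x + 32) < 5 * x - 8 := by
    rw [sqrt_lt' (by linarith)]
    nlinarith [sq_nonneg (x - 2)]
  rw [div_lt_div_iff₀ (by linarith) (by linarith)]
  nlinarith [mul_lt_mul_of_pos_left hs1 (by linarith : 0 < x - 2)]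

theorem u2_lt_u3 {k : ℕ} (hk : 5 ≤ k) : u2 k < u3 k := by
  unfold u2 u3
  have hx : (5 : ℝ) ≤ k := by exact_mod_cast hk
  generalize (k : ℝ) = x at hx ⊢
  have h2 : 0 < x - 2 := by linarith
  have h9 : 0 < 9 * x - 10 := by linarith
  have hpoly : (37 * x ^ 2 - 94 * x + 60) ^ 2 < (9 * x - 10) ^ 2 * (17 * x ^ 2 - 48 * x + 32) := by
    obtain ⟨t, ht, rfl⟩ : ∃ t ≥ 0, x = t + 5 := ⟨x - 5, by linarith, by ring⟩
    rw [← sub_pos]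
    ring_nf
    positivity
  have hamgm : 4 * √(x - 1) ≤ x + 3 := by
    nlinarith [sq_nonneg (√(x - 1) - 2), sq_sqrt (by linarith : 0 ≤ x - 1)]
  have hcleared : 33 * x ^ 2 - 102 * x + 72 + 16 * (x - 1) * √(x - 1) <
      (9 * x - 10) * √(17 * x ^ 2 - 48 * x + 32) := calc
    _ ≤ 37 * x ^ 2 - 94 * x + 60 := by nlinarith
    _ < _ := lt_mul_sqrt_of_sq_lt h9.le hpoly
  rw [div_lt_div_iff₀ (by positivity) (by positivity)]
  nlinarith [mul_lt_mul_of_pos_left hcleared h2]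

theorem u3_lt_u4 {k : ℕ} (hk : 5 ≤ k) : u3 k < u4 k := by
  unfold u3 u4
  have hx : (5 : ℝ) ≤ k := by exact_mod_cast hk
  generalize (k : ℝ) = x at hx ⊢
  have h1 : 0 < x - 1 := by linarith
  have hq : 0 < (x - 2) * (9 * x - 10) := by nlinarith
  have hp : 0 < 2 * x ^ 2 + 3 * x - 17 := by nlinarith
  have hpoly : 0 < 6 * x ^ 4 - 67 * x ^ 3 + 293 * x ^ 2 - 572 * x + 340 := by
    obtain ⟨t, ht, rfl⟩ : ∃ t ≥ 0, x = t + 5 := ⟨x - 5, by linarith, by ring⟩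
    ring_nf
    positivity
  have hs2 : 2 ≤ √(x - 1) := by
    rw [le_sqrt zero_le_two h1.le]
    linarith
  have hs3 : 24 * (x - 1) ^ 2 * √(2 * x / (x - 1)) < 17 * (2 * x - 1) * (x - 1) := by
    refine mul_sqrt_lt_of_sq_lt (by nlinarith) (by positivity) ?_
    have : (24 * (x - 1) ^ 2) ^ 2 * (2 * x / (x - 1)) = 1152 * x * (x - 1) ^ 3 := by
      field_simp
      ring
    rw [this]
    nlinarith [mul_pos (pow_pos h1 2) (by nlinarith : 0 < 4 * x ^ 2 - 4 * x + 289)]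
  set D := 3 * x ^ 2 - 2 * (x - 1) ^ 2 * √(2 * x / (x - 1)) - 4 * x
  have hD : 2 * x ^ 2 + 3 * x - 17 < 12 * D := by linarith
  calc 4 * (x - 1) * (-3 * x + 4 - 2 * √(x - 1)) / ((x - 2) * (9 * x - 10))
      ≤ -(12 * x * (x - 1)) / ((x - 2) * (9 * x - 10)) :=
        div_le_div_of_nonneg_right (by nlinarith) hq.le
    _ < -(2 * x ^ 2 + 3 * x - 17 + 12 * x) / (2 * x ^ 2 + 3 * x - 17) := by
        rw [div_lt_div_iff₀ hq hp]
        linarith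
    _ = -1 - 12 * x / (2 * x ^ 2 + 3 * x - 17) := by
        rw [neg_div, add_div, div_self hp.ne']
        ring
    _ < -1 - x / D := by
        have : x / D < 12 * x / (2 * x ^ 2 + 3 * x - 17) := by
          rw [div_lt_div_iff₀ (by linarith) hp]
          nlinarith
        linarith

theorem u_chain (k : ℕ) (hk : 5 ≤ k) :
    u1 k < u2 k ∧ u2 k < u3 k ∧ u3 k < u4 k :=
  ⟨u1_lt_u2 (by omega), u2_lt_u3 hk, u3_lt_u4 hk⟩
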